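/- Let F be a finite field, let C ⊆ (Fin ℓ → F) be a linear code containing a nonzero vector, let Δ be its minimum distance, and let s ∈ (Fin ℓ → F) and r ∈ ℕ satisfy r < Δ and hammingDist(s, c) ≥ r for every c ∈ C. Let B = {s + c : c ∈ C}. Then: (i) any two distinct vectors both in C, or both in B, are at Hamming distance at least Δ, which is greater than r; (ii) every pair (a, b) ∈ C × B has hammingDist(a, b) ≥ r; and (iii) the number of pairs (a, b) ∈ C × B with hammingDist(a, b) = r equals |C| multiplied by the number of codewords c ∈ C with hammingDist(s, c) = r. -/

import Mathlib

/-- The minimum distance of a linear code `C`: the least Hamming weight of a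
nonzero codeword of `C`. -/
noncomputable def minDist {ℓ : ℕ} {F : Type*} [Field F] [Fintype F] [DecidableEq F]
    (C : Submodule F (Fin ℓ → F)) : ℕ :=
  sInf {w : ℕ | ∃ c ∈ C, c ≠ 0 ∧ hammingNorm c = w}

/-!
The minimum distance of a linear code is the least distance between two distinct codewords,
and a coset `s + C` is an isometric copy of `C`, which gives the two same-side bounds. For the
cross pairs, `d(a, s + c) = d(s, a - c)` with `a - c ∈ C`; so `d(a, s + c) ≥ r` by the choice
of `s`, and for fixed `a ∈ C` the map `b ↦ s + a - b` is a bijection from the neighbours of `a`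
in `s + C` onto the codewords at distance exactly `r` from `s`.
-/

section CosetDistances

variable {ι R S : Type*} [Fintype ι] [AddCommGroup R] [DecidableEq R]
  [SetLike S (ι → R)] [AddSubgroupClass S (ι → R)]

theorem hammingDist_add_left_add_left (s a b : ι → R) :
    hammingDist (s + a) (s + b) = hammingDist a b := by
  simp only [hammingDist_eq_hammingNorm, neg_add_rev, add_assoc, neg_add_cancel_left]

theorem hammingDist_add_eq_hammingDist_sub (a s c : ι → R) :
    hammingDist a (s + c) = hammingDist s (a - c) := by
  rw [hammingDist_comm s, hammingDist_eq_hammingNorm, hammingDist_eq_hammingNorm]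
  congr 1
  abel

theorem le_hammingDist_of_mem_coset {C : S} {s : ι → R} {r : ℕ}
    (hsep : ∀ c ∈ C, r ≤ hammingDist s c) {a b : ι → R} (ha : a ∈ C)
    (hb : b ∈ (fun c => s + c) '' (C : Set (ι → R))) : r ≤ hammingDist a b := by
  obtain ⟨c, hc, rfl⟩ := hb
  rw [hammingDist_add_eq_hammingDist_sub]
  exact hsep _ (sub_mem ha hc)

theorem ncard_pairs_at_hammingDist_eq_coset (C : S) (s : ι → R) (r : ℕ) :
    {ab : (ι → R) × (ι → R) |
        ab.1 ∈ C ∧ ab.2 ∈ (fun c => s + c) '' (C : Set (ι → R)) ∧ hammingDist ab.1 ab.2 = r}.ncard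
      = Nat.card C * {c : ι → R | c ∈ C ∧ hammingDist s c = r}.ncard := by
  set T := {c : ι → R | c ∈ C ∧ hammingDist s c = r}
  let f : (ι → R) × (ι → R) → (ι → R) × (ι → R) := fun p => (p.1, s + p.1 - p.2)
  have hf : f.Injective := by
    rintro ⟨a, c⟩ ⟨a', c'⟩ h
    obtain ⟨rfl, h⟩ := Prod.mk.inj h
    simpa using h
  have himage : {ab : (ι → R) × (ι → R) |
      ab.1 ∈ C ∧ ab.2 ∈ (fun c => s + c) '' (C : Set (ι → R)) ∧ hammingDist ab.1 ab.2 = r}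
      = f '' ((C : Set (ι → R)) ×ˢ T) := by
    ext ⟨a, b⟩
    simp only [Set.mem_ofPred_eq, Set.mem_image, Set.mem_prod, Prod.exists, Prod.mk.injEq,
      SetLike.mem_coe, T, f]
    constructor
    · rintro ⟨ha, ⟨c, hc, rfl⟩, hd⟩
      refine ⟨a, a - c, ⟨ha, sub_mem ha hc, ?_⟩, rfl, by abel⟩
      rwa [← hammingDist_add_eq_hammingDist_sub]
    · rintro ⟨a, c, ⟨ha, hc, hd⟩, rfl, rfl⟩
      refine ⟨ha, ⟨a - c, sub_mem ha hc, by abel⟩, ?_⟩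
      rwa [show s + a - c = s + (a - c) by abel, hammingDist_add_eq_hammingDist_sub,
        sub_sub_cancel]
  rw [himage, Set.ncard_image_of_injective _ hf, Set.ncard_prod, ← Nat.card_coe_set_eq]
  rfl

end CosetDistances

theorem minDist_le_hammingDist {ℓ : ℕ} {F : Type*} [Field F] [Fintype F] [DecidableEq F]
    (C : Submodule F (Fin ℓ → F)) {a a' : Fin ℓ → F} (ha : a ∈ C) (ha' : a' ∈ C)
    (hne : a ≠ a') : minDist C ≤ hammingDist a a' :=
  Nat.sInf_le ⟨-a + a', add_mem (neg_mem ha) ha', by rwa [ne_eq, neg_add_eq_zero],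
    (hammingDist_eq_hammingNorm a a').symm⟩

theorem minDist_le_hammingDist_of_mem_coset {ℓ : ℕ} {F : Type*} [Field F] [Fintype F]
    [DecidableEq F] (C : Submodule F (Fin ℓ → F)) (s : Fin ℓ → F) {b b' : Fin ℓ → F}
    (hb : b ∈ (fun c => s + c) '' (C : Set (Fin ℓ → F)))
    (hb' : b' ∈ (fun c => s + c) '' (C : Set (Fin ℓ → F))) (hne : b ≠ b') :
    minDist C ≤ hammingDist b b' := by
  obtain ⟨c, hc, rfl⟩ := hb
  obtain ⟨c', hc', rfl⟩ := hb'
  rw [hammingDist_add_left_add_left]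
  exact minDist_le_hammingDist C hc hc' fun h => hne (h ▸ rfl)

theorem stmt_16_general {ℓ : ℕ} {F : Type*} [Field F] [Fintype F] [DecidableEq F]
    (C : Submodule F (Fin ℓ → F))
    (s : Fin ℓ → F) (r : ℕ)
    (hsep : ∀ c ∈ C, r ≤ hammingDist s c) :
    (∀ a ∈ C, ∀ a' ∈ C, a ≠ a' → minDist C ≤ hammingDist a a') ∧
    (∀ b ∈ (fun c => s + c) '' (C : Set (Fin ℓ → F)),
      ∀ b' ∈ (fun c => s + c) '' (C : Set (Fin ℓ → F)), b ≠ b' →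
        minDist C ≤ hammingDist b b') ∧
    (∀ a ∈ C, ∀ b ∈ (fun c => s + c) '' (C : Set (Fin ℓ → F)),
        r ≤ hammingDist a b) ∧
    {ab : (Fin ℓ → F) × (Fin ℓ → F) |
        ab.1 ∈ C ∧ ab.2 ∈ (fun c => s + c) '' (C : Set (Fin ℓ → F)) ∧
        hammingDist ab.1 ab.2 = r}.ncard
      = Nat.card C * {c : Fin ℓ → F | c ∈ C ∧ hammingDist s c = r}.ncard :=
  ⟨fun _ ha _ ha' => minDist_le_hammingDist C ha ha',
    fun _ hb _ hb' => minDist_le_hammingDist_of_mem_coset C s hb hb',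
    fun _ ha _ hb => le_hammingDist_of_mem_coset hsep ha hb,
    ncard_pairs_at_hammingDist_eq_coset C s r⟩

/-- the general construction of a dense bipartite graph from a linear
code `C` together with a center `s` at distance `≥ r` from every codeword, where
`r < Δ(C)`: the parts are `C` and the coset `B = s + C`; distinct same-side vectors
are at distance `≥ Δ(C) > r`, all cross pairs are at distance `≥ r`, and the number
of cross pairs at distance exactly `r` is `|C|` times the number of codewords at
distance exactly `r` from `s`. -/
theorem stmt_16 {ℓ : ℕ} {F : Type*} [Field F] [Fintype F] [DecidableEq F]
    (C : Submodule F (Fin ℓ → F)) (hC : ∃ c ∈ C, c ≠ 0)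
    (s : Fin ℓ → F) (r : ℕ) (hr : r < minDist C)
    (hsep : ∀ c ∈ C, r ≤ hammingDist s c) :
    (∀ a ∈ C, ∀ a' ∈ C, a ≠ a' → minDist C ≤ hammingDist a a') ∧
    (∀ b ∈ (fun c => s + c) '' (C : Set (Fin ℓ → F)),
      ∀ b' ∈ (fun c => s + c) '' (C : Set (Fin ℓ → F)), b ≠ b' →
        minDist C ≤ hammingDist b b') ∧
    (∀ a ∈ C, ∀ b ∈ (fun c => s + c) '' (C : Set (Fin ℓ → F)),
        r ≤ hammingDist a b) ∧
    {ab : (Fin ℓ → F) × (Fin ℓ → F) |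
        ab.1 ∈ C ∧ ab.2 ∈ (fun c => s + c) '' (C : Set (Fin ℓ → F)) ∧
        hammingDist ab.1 ab.2 = r}.ncard
      = Nat.card C * {c : Fin ℓ → F | c ∈ C ∧ hammingDist s c = r}.ncard :=
  stmt_16_general C s r hsep
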